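/- arXiv:1603.09538 — 4 statements merged into one kernel-verified Lean document; each statement's English description precedes it below -/
import Mathlib

section
/- Let t₀ > 0 and let g̃: ℝ → ℝ be an odd continuous function with g̃(t) = 0 for all t ≥ t₀. If u ∈ H^s(ℝ^N) is a weak solution of (−Δ)^s u = g̃(u) in ℝ^N, then −t₀ ≤ u(x) ≤ t₀ for almost every x ∈ ℝ^N. -/
open MeasureTheory Filter Set

noncomputable section

/-- Euclidean space `ℝ^N`. -/
abbrev RN (N : ℕ) := EuclideanSpace ℝ (Fin N)

/-- The squared Gagliardo seminorm `[u]² = ∬ |u(x)-u(y)|²/|x-y|^{N+2s} dx dy`. -/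
def gagliardoSq (N : ℕ) (s : ℝ) (u : RN N → ℝ) : ℝ :=
  ∫ p : RN N × RN N, (u p.1 - u p.2) ^ 2 / ‖p.1 - p.2‖ ^ ((N : ℝ) + 2 * s)

/-- Finiteness (integrability) of the Gagliardo kernel. -/
def GagliardoFinite (N : ℕ) (s : ℝ) (u : RN N → ℝ) : Prop :=
  Integrable (fun p : RN N × RN N => (u p.1 - u p.2) ^ 2 / ‖p.1 - p.2‖ ^ ((N : ℝ) + 2 * s))

/-- The fractional bilinear form `∬ (u(x)-u(y))(v(x)-v(y))/|x-y|^{N+2s} dx dy`. -/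
def fracForm (N : ℕ) (s : ℝ) (u v : RN N → ℝ) : ℝ :=
  ∫ p : RN N × RN N, (u p.1 - u p.2) * (v p.1 - v p.2) / ‖p.1 - p.2‖ ^ ((N : ℝ) + 2 * s)

/-- Membership in `H^s(ℝ^N)`: `u ∈ L²` with finite Gagliardo seminorm. -/
def MemHs (N : ℕ) (s : ℝ) (u : RN N → ℝ) : Prop :=
  MemLp u 2 (volume : Measure (RN N)) ∧ GagliardoFinite N s u

/-- Radially symmetric function. -/
def RadialFun (N : ℕ) (u : RN N → ℝ) : Prop :=
  ∀ x y : RN N, ‖x‖ = ‖y‖ → u x = u y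

/-- Membership in `H^s_rad(ℝ^N)`. -/
def MemHsRad (N : ℕ) (s : ℝ) (u : RN N → ℝ) : Prop :=
  MemHs N s u ∧ RadialFun N u

/-- Weak solution of `(-Δ)^s u = g(u)` in `ℝ^N`, tested against all `φ ∈ H^s`. -/
def IsWeakSol (N : ℕ) (s : ℝ) (g : ℝ → ℝ) (u : RN N → ℝ) : Prop :=
  MemHs N s u ∧ ∀ φ : RN N → ℝ, MemHs N s φ →
    fracForm N s u φ = ∫ x : RN N, g (u x) * φ x

/-- `G(t) = ∫₀ᵗ g`. -/
def Gprim (g : ℝ → ℝ) (t : ℝ) : ℝ := ∫ τ in (0:ℝ)..t, g τ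

/-- The energy functional `I(u) = ½[u]² - ∫ G(u)`. -/
def energy (N : ℕ) (s : ℝ) (g : ℝ → ℝ) (u : RN N → ℝ) : ℝ :=
  1 / 2 * gagliardoSq N s u - ∫ x : RN N, Gprim g (u x)

/-- The critical exponent `2*_s = 2N/(N-2s)`. -/
def critExp (N : ℕ) (s : ℝ) : ℝ := 2 * N / ((N : ℝ) - 2 * s)

/-- `g ∈ C^{1,α}(ℝ,ℝ)` (derivative locally `α`-Hölder). -/
def C1Holder (α : ℝ) (g : ℝ → ℝ) : Prop :=
  ∃ g' : ℝ → ℝ, (∀ t, HasDerivAt g (g' t) t) ∧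
    ∀ R > 0, ∃ C > 0, ∀ x ∈ Icc (-R) R, ∀ y ∈ Icc (-R) R,
      |g' x - g' y| ≤ C * |x - y| ^ α

/-- Odd function. -/
def OddFun (g : ℝ → ℝ) : Prop := ∀ t, g (-t) = -g t

/-- (g1): `-∞ < liminf_{t→0⁺} g(t)/t ≤ limsup_{t→0⁺} g(t)/t = -m < 0`. -/
def CondG1 (g : ℝ → ℝ) (m : ℝ) : Prop :=
  0 < m ∧
  (⊥ : EReal) < liminf (fun t : ℝ => ((g t / t : ℝ) : EReal)) (nhdsWithin 0 (Ioi 0)) ∧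
  limsup (fun t : ℝ => ((g t / t : ℝ) : EReal)) (nhdsWithin 0 (Ioi 0)) = ((-m : ℝ) : EReal)

/-- (g2): `-∞ < limsup_{t→+∞} g(t)/t^{2*_s-1} ≤ 0`. -/
def CondG2 (N : ℕ) (s : ℝ) (g : ℝ → ℝ) : Prop :=
  (⊥ : EReal) < limsup (fun t : ℝ => ((g t / t ^ (critExp N s - 1) : ℝ) : EReal)) atTop ∧
  limsup (fun t : ℝ => ((g t / t ^ (critExp N s - 1) : ℝ) : EReal)) atTop ≤ (0 : EReal)

/-- (g2'): `lim_{|t|→∞} g(t)/|t|^{(N+2s)/(N-2s)} = 0`. -/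
def CondG2' (N : ℕ) (s : ℝ) (g : ℝ → ℝ) : Prop :=
  Tendsto (fun t : ℝ => g t / |t| ^ (critExp N s - 1)) (comap abs atTop) (nhds 0)

/-- (g3): `G(ξ₀) > 0` for some `ξ₀ > 0`. -/
def CondG3 (g : ℝ → ℝ) : Prop := ∃ ξ₀ > 0, 0 < Gprim g ξ₀

/-- (h1): `limsup_{t→0⁺} g(t)/t^{2*_s-1} ≤ 0`. -/
def CondH1 (N : ℕ) (s : ℝ) (g : ℝ → ℝ) : Prop :=
  limsup (fun t : ℝ => ((g t / t ^ (critExp N s - 1) : ℝ) : EReal)) (nhdsWithin 0 (Ioi 0))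
    ≤ (0 : EReal)

/-- (h2): `lim_{t→+∞} g(t)/t^{2*_s-1} = 0`. -/
def CondH2 (N : ℕ) (s : ℝ) (g : ℝ → ℝ) : Prop :=
  Tendsto (fun t : ℝ => g t / t ^ (critExp N s - 1)) atTop (nhds 0)

/-- `f(t) = max{0, (m/2)t + g(t)}`. -/
def fplus (g : ℝ → ℝ) (m t : ℝ) : ℝ := max 0 (m / 2 * t + g t)

/-- The penalty function `h(t) = t^p sup_{0<τ≤t} f(τ)/τ^p` for `t ≥ 0`, odd extension. -/
def hfun (g : ℝ → ℝ) (m p : ℝ) (t : ℝ) : ℝ :=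
  if 0 ≤ t then t ^ p * sSup ((fun τ => fplus g m τ / τ ^ p) '' Ioc 0 t)
  else -((-t) ^ p * sSup ((fun τ => fplus g m τ / τ ^ p) '' Ioc 0 (-t)))

/-- `H(t) = ∫₀ᵗ h`. -/
def Hfun (g : ℝ → ℝ) (m p : ℝ) (t : ℝ) : ℝ := ∫ τ in (0:ℝ)..t, hfun g m p τ

/-- `‖u‖² = [u]² + (m/2)‖u‖_{L²}²`. -/
def normSqm (N : ℕ) (s m : ℝ) (u : RN N → ℝ) : ℝ :=
  gagliardoSq N s u + m / 2 * ∫ x : RN N, u x ^ 2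

/-- `‖u‖_{H^s}² = [u]² + ‖u‖_{L²}²`. -/
def hsNormSq (N : ℕ) (s : ℝ) (u : RN N → ℝ) : ℝ :=
  gagliardoSq N s u + ∫ x : RN N, u x ^ 2

/-- The comparison functional `J(u) = ½‖u‖² - 2∫ H(u)`. -/
def Jfun (N : ℕ) (s : ℝ) (g : ℝ → ℝ) (m p : ℝ) (u : RN N → ℝ) : ℝ :=
  1 / 2 * normSqm N s m u - 2 * ∫ x : RN N, Hfun g m p (u x)

/-- `J'(u)φ`. -/
def Jder (N : ℕ) (s : ℝ) (g : ℝ → ℝ) (m p : ℝ) (u φ : RN N → ℝ) : ℝ :=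
  fracForm N s u φ + m / 2 * (∫ x : RN N, u x * φ x) - 2 * ∫ x : RN N, hfun g m p (u x) * φ x

/-- Dual norm `‖J'(u)‖_{(H^s_rad)*}`. -/
def JderNorm (N : ℕ) (s : ℝ) (g : ℝ → ℝ) (m p : ℝ) (u : RN N → ℝ) : ℝ :=
  sSup ((fun φ => |Jder N s g m p u φ|) ''
    {φ : RN N → ℝ | MemHsRad N s φ ∧ normSqm N s m φ ≤ 1})

/-- `I'(u)φ`. -/
def Ider (N : ℕ) (s : ℝ) (g : ℝ → ℝ) (u φ : RN N → ℝ) : ℝ :=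
  fracForm N s u φ - ∫ x : RN N, g (u x) * φ x

/-- The augmented functional `Ĩ(θ,u) = ½e^{(N-2s)θ}[u]² - e^{Nθ}∫G(u)`. -/
def Itilde (N : ℕ) (s : ℝ) (g : ℝ → ℝ) (θ : ℝ) (u : RN N → ℝ) : ℝ :=
  1 / 2 * Real.exp (((N : ℝ) - 2 * s) * θ) * gagliardoSq N s u -
    Real.exp ((N : ℝ) * θ) * ∫ x : RN N, Gprim g (u x)

/-- `Ĩ'(θ,u)φ` (partial derivative in `u`). -/
def Itder (N : ℕ) (s : ℝ) (g : ℝ → ℝ) (θ : ℝ) (u φ : RN N → ℝ) : ℝ :=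
  Real.exp (((N : ℝ) - 2 * s) * θ) * fracForm N s u φ -
    Real.exp ((N : ℝ) * θ) * ∫ x : RN N, g (u x) * φ x

/-- Dual norm of `Ĩ'(θ,u)` over the unit ball of `H^s_rad`. -/
def ItderNorm (N : ℕ) (s : ℝ) (g : ℝ → ℝ) (m : ℝ) (θ : ℝ) (u : RN N → ℝ) : ℝ :=
  sSup ((fun φ => |Itder N s g θ u φ|) ''
    {φ : RN N → ℝ | MemHsRad N s φ ∧ normSqm N s m φ ≤ 1})

/-- `(∂/∂θ)Ĩ(θ,u)`. -/
def Ithder (N : ℕ) (s : ℝ) (g : ℝ → ℝ) (θ : ℝ) (u : RN N → ℝ) : ℝ :=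
  ((N : ℝ) - 2 * s) / 2 * Real.exp (((N : ℝ) - 2 * s) * θ) * gagliardoSq N s u -
    (N : ℝ) * Real.exp ((N : ℝ) * θ) * ∫ x : RN N, Gprim g (u x)

/-- The closed unit disk `D_n ⊂ ℝ^n`. -/
def ballD (n : ℕ) : Set (EuclideanSpace ℝ (Fin n)) := {σ | ‖σ‖ ≤ 1}

/-- The polyhedron `S^{n-1} = {σ : Σ|σⱼ| = 1}`. -/
def sphereL1 (n : ℕ) : Set (EuclideanSpace ℝ (Fin n)) := {σ | ∑ j, |σ j| = 1}

/-- Continuity of a family of functions with respect to the `H^s_rad` norm. -/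
def HNormCont (N : ℕ) (s m : ℝ) {E : Type} [NormedAddCommGroup E]
    (γ : E → RN N → ℝ) (A : Set E) : Prop :=
  ∀ σ ∈ A, ∀ ε > 0, ∃ δ > 0, ∀ σ' ∈ A, ‖σ' - σ‖ < δ →
    Real.sqrt (normSqm N s m (γ σ' - γ σ)) < ε

/-- The class `Γ_n` of odd continuous maps `D_n → H^s_rad` equal to `γn` on `S^{n-1}`. -/
def GammaN (N : ℕ) (s m : ℝ) (n : ℕ) (γn : EuclideanSpace ℝ (Fin n) → RN N → ℝ) :
    Set (EuclideanSpace ℝ (Fin n) → RN N → ℝ) :=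
  {γ | (∀ σ ∈ ballD n, MemHsRad N s (γ σ)) ∧ HNormCont N s m γ (ballD n) ∧
    (∀ σ ∈ ballD n, γ (-σ) = -γ σ) ∧ ∀ σ ∈ sphereL1 n, γ σ = γn σ}

/-- The symmetric minimax value `b_n` of `I`. -/
def bN (N : ℕ) (s : ℝ) (g : ℝ → ℝ) (m : ℝ) (n : ℕ)
    (γn : EuclideanSpace ℝ (Fin n) → RN N → ℝ) : ℝ :=
  sInf ((fun γ => sSup ((fun σ => energy N s g (γ σ)) '' ballD n)) '' GammaN N s m n γn)

/-- The symmetric minimax value `c_n` of `J`. -/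
def cN (N : ℕ) (s : ℝ) (g : ℝ → ℝ) (m p : ℝ) (n : ℕ)
    (γn : EuclideanSpace ℝ (Fin n) → RN N → ℝ) : ℝ :=
  sInf ((fun γ => sSup ((fun σ => Jfun N s g m p (γ σ)) '' ballD n)) '' GammaN N s m n γn)

/-- The augmented class `Γ̃_n`. -/
def GammaTildeN (N : ℕ) (s m : ℝ) (n : ℕ)
    (γn : EuclideanSpace ℝ (Fin n) → RN N → ℝ) :
    Set ((EuclideanSpace ℝ (Fin n) → ℝ) × (EuclideanSpace ℝ (Fin n) → RN N → ℝ)) :=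
  {q | ContinuousOn q.1 (ballD n) ∧ (∀ σ ∈ ballD n, MemHsRad N s (q.2 σ)) ∧
    HNormCont N s m q.2 (ballD n) ∧
    (∀ σ ∈ ballD n, q.1 (-σ) = q.1 σ ∧ q.2 (-σ) = -q.2 σ) ∧
    ∀ σ ∈ sphereL1 n, q.1 σ = 0 ∧ q.2 σ = γn σ}

/-- The augmented minimax value `b̃_n`. -/
def bTildeN (N : ℕ) (s : ℝ) (g : ℝ → ℝ) (m : ℝ) (n : ℕ)
    (γn : EuclideanSpace ℝ (Fin n) → RN N → ℝ) : ℝ :=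
  sInf ((fun q => sSup ((fun σ => Itilde N s g (q.1 σ) (q.2 σ)) '' ballD n)) ''
    GammaTildeN N s m n γn)

/-- Continuity of a path of functions with respect to the `H^s` norm. -/
def hsPathCont (N : ℕ) (s : ℝ) (γ : ℝ → RN N → ℝ) (A : Set ℝ) : Prop :=
  ∀ t ∈ A, ∀ ε > 0, ∃ δ > 0, ∀ t' ∈ A, |t' - t| < δ →
    Real.sqrt (hsNormSq N s (γ t' - γ t)) < ε

/-- The mountain pass class `Γ` of `H^s` paths. -/
def GammaMp (N : ℕ) (s : ℝ) (g : ℝ → ℝ) : Set (ℝ → RN N → ℝ) :=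
  {γ | (∀ t ∈ Icc (0:ℝ) 1, MemHs N s (γ t)) ∧ hsPathCont N s γ (Icc 0 1) ∧
    γ 0 = 0 ∧ energy N s g (γ 1) < 0}

/-- The mountain pass value `b_mp`. -/
def bMp (N : ℕ) (s : ℝ) (g : ℝ → ℝ) : ℝ :=
  sInf ((fun γ => sSup ((fun t => energy N s g (γ t)) '' Icc (0:ℝ) 1)) '' GammaMp N s g)

/-- The radial mountain pass class `Γ_r`. -/
def GammaMpR (N : ℕ) (s : ℝ) (g : ℝ → ℝ) : Set (ℝ → RN N → ℝ) :=
  {γ | (∀ t ∈ Icc (0:ℝ) 1, MemHsRad N s (γ t)) ∧ hsPathCont N s γ (Icc 0 1) ∧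
    γ 0 = 0 ∧ energy N s g (γ 1) < 0}

/-- The radial mountain pass value `b_{mp,r}`. -/
def bMpR (N : ℕ) (s : ℝ) (g : ℝ → ℝ) : ℝ :=
  sInf ((fun γ => sSup ((fun t => energy N s g (γ t)) '' Icc (0:ℝ) 1)) '' GammaMpR N s g)

/-- The augmented radial mountain pass class `Γ̃_r`. -/
def GammaTildeMpR (N : ℕ) (s : ℝ) (g : ℝ → ℝ) : Set ((ℝ → ℝ) × (ℝ → RN N → ℝ)) :=
  {q | q.2 ∈ GammaMpR N s g ∧ ContinuousOn q.1 (Icc 0 1) ∧ q.1 0 = 0 ∧ q.1 1 = 0}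

/-- The augmented radial mountain pass value `b̃_{mp,r}`. -/
def bTildeMpR (N : ℕ) (s : ℝ) (g : ℝ → ℝ) : ℝ :=
  sInf ((fun q => sSup ((fun t => Itilde N s g (q.1 t) (q.2 t)) '' Icc (0:ℝ) 1)) ''
    GammaTildeMpR N s g)

/-- The symmetric class `Γ_1` over `D_1 = [-1,1]` with boundary value `e`. -/
def Gamma1 (N : ℕ) (s : ℝ) (e : RN N → ℝ) : Set (ℝ → RN N → ℝ) :=
  {γ | (∀ t ∈ Icc (-1:ℝ) 1, MemHsRad N s (γ t)) ∧ hsPathCont N s γ (Icc (-1) 1) ∧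
    (∀ t ∈ Icc (-1:ℝ) 1, γ (-t) = -γ t) ∧ γ 1 = e ∧ γ (-1) = -e}

/-- The first symmetric minimax value `b_1`. -/
def b1val (N : ℕ) (s : ℝ) (g : ℝ → ℝ) (e : RN N → ℝ) : ℝ :=
  sInf ((fun γ => sSup ((fun t => energy N s g (γ t)) '' Icc (-1:ℝ) 1)) '' Gamma1 N s e)

/-- Membership in `D^{s,2}(ℝ^N)`: `u ∈ L^{2*_s}` with finite Gagliardo seminorm. -/
def MemDs (N : ℕ) (s : ℝ) (u : RN N → ℝ) : Prop :=
  MemLp u (ENNReal.ofReal (critExp N s)) (volume : Measure (RN N)) ∧ GagliardoFinite N s u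

/-- Weak solution of `(-Δ)^s u = g(u)` tested against `φ ∈ C_c^∞(ℝ^N)`. -/
def IsWeakSolCc (N : ℕ) (s : ℝ) (g : ℝ → ℝ) (u : RN N → ℝ) : Prop :=
  ∀ φ : RN N → ℝ, ContDiff ℝ (⊤ : ℕ∞) φ → HasCompactSupport φ →
    fracForm N s u φ = ∫ x : RN N, g (u x) * φ x

/-- The perturbed functional `I_ε(u) = ½[u]² - ∫ (G(u) - (ε/2)u²)`. -/
def Ieps (N : ℕ) (s : ℝ) (g : ℝ → ℝ) (ε : ℝ) (u : RN N → ℝ) : ℝ :=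
  1 / 2 * gagliardoSq N s u - ∫ x : RN N, (Gprim g (u x) - ε / 2 * u x ^ 2)

/-- The mountain pass class `Γ_ε` for `I_ε`. -/
def GammaEps (N : ℕ) (s : ℝ) (g : ℝ → ℝ) (ε : ℝ) : Set (ℝ → RN N → ℝ) :=
  {γ | (∀ t ∈ Icc (0:ℝ) 1, MemHsRad N s (γ t)) ∧ hsPathCont N s γ (Icc 0 1) ∧
    γ 0 = 0 ∧ Ieps N s g ε (γ 1) < 0}

/-- The mountain pass value `b_ε`. -/
def bEps (N : ℕ) (s : ℝ) (g : ℝ → ℝ) (ε : ℝ) : ℝ :=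
  sInf ((fun γ => sSup ((fun t => Ieps N s g ε (γ t)) '' Icc (0:ℝ) 1)) '' GammaEps N s g ε)

end

lemma max_ineq (a b : ℝ) : (max a 0 - max b 0)^2 ≤ (a - b) * (max a 0 - max b 0) := by
  rcases le_total a 0 with h | h <;> rcases le_total b 0 with h' | h' <;>
    simp [max_eq_left, max_eq_right, *] <;> nlinarith


lemma div_le_div_of_nonneg_right' {a b c : ℝ} (h : a ≤ b) (hc : 0 ≤ c) : a / c ≤ b / c := by
  rcases hc.eq_or_lt with rfl | h0
  · simp
  · exact (div_le_div_iff_of_pos_right h0).mpr h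

lemma key_bound (N : ℕ) (s t₀ : ℝ) (gt : ℝ → ℝ) (u : RN N → ℝ)
    (hN : 2 ≤ N) (hs0 : 0 < s) (hNs : 2 * s < (N : ℝ)) (ht₀ : 0 < t₀)
    (hvan : ∀ t, t₀ ≤ t → gt t = 0)
    (hu : IsWeakSol N s gt u) :
    ∀ᵐ x : RN N ∂(volume), u x ≤ t₀ := by
  haveI : Nonempty (Fin N) := ⟨⟨0, by omega⟩⟩
  have hrpos : (0 : ℝ) < (N : ℝ) + 2 * s := by positivity
  set φ : RN N → ℝ := fun x => max (u x - t₀) 0 with hφdef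
  have hum : AEStronglyMeasurable u (volume : Measure (RN N)) := hu.1.1.1
  have hφm : AEStronglyMeasurable φ (volume : Measure (RN N)) :=
    ((continuous_id.sub continuous_const).max continuous_const).comp_aestronglyMeasurable hum
  have hdcont : Continuous fun p : RN N × RN N => ‖p.1 - p.2‖ ^ ((N : ℝ) + 2 * s) :=
    Continuous.rpow_const (continuous_fst.sub continuous_snd).norm
      (fun _ => Or.inr hrpos.le)
  have hvol : (volume : Measure (RN N × RN N)) =
      (volume : Measure (RN N)).prod (volume : Measure (RN N)) := Measure.volume_eq_prod _ _
  have hφm1 : AEStronglyMeasurable (fun p : RN N × RN N => φ p.1) volume := by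
    rw [hvol]
    exact hφm.comp_quasiMeasurePreserving Measure.quasiMeasurePreserving_fst
  have hφm2 : AEStronglyMeasurable (fun p : RN N × RN N => φ p.2) volume := by
    rw [hvol]
    exact hφm.comp_quasiMeasurePreserving Measure.quasiMeasurePreserving_snd
  have hum1 : AEStronglyMeasurable (fun p : RN N × RN N => u p.1) volume := by
    rw [hvol]
    exact hum.comp_quasiMeasurePreserving Measure.quasiMeasurePreserving_fst
  have hum2 : AEStronglyMeasurable (fun p : RN N × RN N => u p.2) volume := by
    rw [hvol]
    exact hum.comp_quasiMeasurePreserving Measure.quasiMeasurePreserving_snd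
  have hdnn : ∀ p : RN N × RN N, (0:ℝ) ≤ ‖p.1 - p.2‖ ^ ((N : ℝ) + 2 * s) :=
    fun p => Real.rpow_nonneg (norm_nonneg _) _
  -- pointwise bounds
  have hφsub : ∀ p : RN N × RN N, (φ p.1 - φ p.2)^2 ≤ (u p.1 - u p.2)^2 := by
    intro p
    have h := abs_max_sub_max_le_abs (u p.1 - t₀) (u p.2 - t₀) 0
    have h2 : |φ p.1 - φ p.2| ≤ |u p.1 - u p.2| := by
      simpa [hφdef, sub_sub_sub_cancel_right] using h
    calc (φ p.1 - φ p.2)^2 = |φ p.1 - φ p.2|^2 := (sq_abs _).symm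
      _ ≤ |u p.1 - u p.2|^2 := by nlinarith [abs_nonneg (φ p.1 - φ p.2)]
      _ = (u p.1 - u p.2)^2 := sq_abs _
  -- φ ∈ H^s
  have hφHs : MemHs N s φ := by
    constructor
    · refine MemLp.of_le hu.1.1 hφm (Eventually.of_forall fun x => ?_)
      simp only [Real.norm_eq_abs, hφdef]
      rcases le_total (u x - t₀) 0 with h | h
      · simp [max_eq_right h, abs_nonneg]
      · rw [max_eq_left h, abs_of_nonneg h]
        have : u x - t₀ ≤ u x := by linarith
        exact this.trans (le_abs_self _)
    · refine Integrable.mono hu.1.2 ?_ (Eventually.of_forall fun p => ?_)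
      · exact (((hφm1.aemeasurable.sub hφm2.aemeasurable).pow_const 2).div
          hdcont.measurable.aemeasurable).aestronglyMeasurable
      · simp only [Real.norm_eq_abs]
        rw [abs_of_nonneg (div_nonneg (sq_nonneg _) (hdnn p)),
          abs_of_nonneg (div_nonneg (sq_nonneg _) (hdnn p))]
        exact div_le_div_of_nonneg_right' (hφsub p) (hdnn p)
  -- the tested kernel
  set K : RN N × RN N → ℝ :=
    fun p => (u p.1 - u p.2) * (φ p.1 - φ p.2) / ‖p.1 - p.2‖ ^ ((N : ℝ) + 2 * s) with hKdef
  have hKnonneg : ∀ p, (φ p.1 - φ p.2)^2 / ‖p.1 - p.2‖ ^ ((N : ℝ) + 2 * s) ≤ K p := by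
    intro p
    refine div_le_div_of_nonneg_right' ?_ (hdnn p)
    have := max_ineq (u p.1 - t₀) (u p.2 - t₀)
    calc (φ p.1 - φ p.2)^2 = (max (u p.1 - t₀) 0 - max (u p.2 - t₀) 0)^2 := rfl
      _ ≤ ((u p.1 - t₀) - (u p.2 - t₀)) * (max (u p.1 - t₀) 0 - max (u p.2 - t₀) 0) := this
      _ = (u p.1 - u p.2) * (φ p.1 - φ p.2) := by rw [sub_sub_sub_cancel_right]
  have hK0le : ∀ p, (0:ℝ) ≤ K p := fun p =>
    le_trans (div_nonneg (sq_nonneg _) (hdnn p)) (hKnonneg p)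
  have hKint : Integrable K (volume : Measure (RN N × RN N)) := by
    refine Integrable.mono hu.1.2 ?_ (Eventually.of_forall fun p => ?_)
    · exact (((hum1.aemeasurable.sub hum2.aemeasurable).mul
          (hφm1.aemeasurable.sub hφm2.aemeasurable)).div
          hdcont.measurable.aemeasurable).aestronglyMeasurable
    · simp only [Real.norm_eq_abs, hKdef]
      rw [abs_of_nonneg (div_nonneg (sq_nonneg _) (hdnn p)), abs_div, abs_of_nonneg (hdnn p)]
      refine div_le_div_of_nonneg_right' ?_ (hdnn p)
      have h2 : |φ p.1 - φ p.2| ≤ |u p.1 - u p.2| := by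
        simpa [hφdef, sub_sub_sub_cancel_right] using
          abs_max_sub_max_le_abs (u p.1 - t₀) (u p.2 - t₀) 0
      calc |(u p.1 - u p.2) * (φ p.1 - φ p.2)| = |u p.1 - u p.2| * |φ p.1 - φ p.2| := abs_mul _ _
        _ ≤ |u p.1 - u p.2| * |u p.1 - u p.2| := by
            exact mul_le_mul_of_nonneg_left h2 (abs_nonneg _)
        _ = (u p.1 - u p.2)^2 := by rw [abs_mul_abs_self, ← pow_two]
  -- the weak equation gives ∫ K = 0
  have hRHS : (∫ x : RN N, gt (u x) * φ x) = 0 := by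
    have : (fun x : RN N => gt (u x) * φ x) = fun _ => (0:ℝ) := by
      funext x
      rcases le_total t₀ (u x) with h | h
      · rw [hvan _ h, zero_mul]
      · have : φ x = 0 := max_eq_right (by linarith)
        rw [this, mul_zero]
    rw [this, integral_zero]
  have hIK : (∫ p : RN N × RN N, K p) = 0 := (hu.2 φ hφHs).trans hRHS
  have hKae : K =ᵐ[volume] 0 :=
    (integral_eq_zero_iff_of_nonneg_ae (Eventually.of_forall hK0le) hKint).mp hIK
  -- diagonal is null
  have hdiag : ∀ᵐ p : RN N × RN N ∂volume, p.1 ≠ p.2 := by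
    rw [hvol]
    refine (Measure.ae_prod_iff_ae_ae (p := fun z : RN N × RN N => z.1 ≠ z.2)
      ((measurableSet_eq_fun measurable_fst measurable_snd).compl)).mpr ?_
    refine Eventually.of_forall fun x => ?_
    rw [ae_iff]
    simp only [not_not]
    have hset : {y : RN N | (x, y).1 = (x, y).2} = {x} := by ext y; simp [eq_comm]
    rw [hset]
    exact measure_singleton x
  -- conclude φ x = φ y for a.e. pair
  have hφeq : ∀ᵐ p : RN N × RN N ∂volume, φ p.1 = φ p.2 := by
    filter_upwards [hKae, hdiag] with p hp hne
    have hd : (0:ℝ) < ‖p.1 - p.2‖ ^ ((N : ℝ) + 2 * s) :=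
      Real.rpow_pos_of_pos (by simpa [sub_eq_zero] using hne) _
    have h1 : (φ p.1 - φ p.2)^2 / ‖p.1 - p.2‖ ^ ((N : ℝ) + 2 * s) ≤ 0 := by
      simpa [hp] using hKnonneg p
    have h2 : (φ p.1 - φ p.2)^2 ≤ 0 := by
      by_contra hcon
      push_neg at hcon
      exact absurd h1 (not_le.mpr (div_pos hcon hd))
    have h3 : φ p.1 - φ p.2 = 0 := by nlinarith [sq_nonneg (φ p.1 - φ p.2)]
    linarith
  rw [hvol] at hφeq
  have hfub := Measure.ae_ae_of_ae_prod hφeq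
  haveI : Nontrivial (RN N) := ⟨0, EuclideanSpace.single ⟨0, by omega⟩ (1:ℝ), by
    intro h
    have h0 := congrArg (fun v : RN N => v ⟨0, by omega⟩) h
    simp [EuclideanSpace.single_apply] at h0⟩
  have hinf : (volume : Measure (RN N)) univ = (⊤ : ENNReal) :=
    measure_univ_of_isAddLeftInvariant (volume : Measure (RN N))
  haveI : NeZero (volume : Measure (RN N)) := ⟨by
    intro h
    rw [h] at hinf
    simp at hinf⟩
  obtain ⟨x₀, hx₀⟩ := hfub.exists
  -- φ is a.e. constant c := φ x₀, and c = 0 since φ ∈ L² and volume is infinite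
  have hc : φ x₀ = 0 := by
    by_contra hc0
    have hsq : Integrable (fun _ : RN N => (φ x₀)^2) volume := by
      refine (hφHs.1.integrable_sq).congr ?_
      filter_upwards [hx₀] with y hy
      rw [hy]
    rw [integrable_const_iff] at hsq
    rcases hsq with h | h
    · exact hc0 (by nlinarith [sq_nonneg (φ x₀)])
    · haveI := h
      exact measure_ne_top _ univ hinf
  filter_upwards [hx₀] with y hy
  have hφy : φ y = 0 := by rw [← hy]; exact hc
  have : u y - t₀ ≤ 0 := max_eq_right_iff.mp hφy
  linarith

/-- any weak solution of `(-Δ)^s u = g̃(u)` with `g̃` odd continuous and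
vanishing on `[t₀,∞)` satisfies `-t₀ ≤ u ≤ t₀` a.e. -/
theorem truncated_nonlinearity_solution_bounded
    (N : ℕ) (s t₀ : ℝ) (gt : ℝ → ℝ) (u : RN N → ℝ)
    (hN : 2 ≤ N) (hs0 : 0 < s) (hs1 : s < 1) (hNs : 2 * s < (N : ℝ))
    (ht₀ : 0 < t₀) (hcont : Continuous gt) (hodd : OddFun gt)
    (hvan : ∀ t, t₀ ≤ t → gt t = 0)
    (hu : IsWeakSol N s gt u) :
    ∀ᵐ x : RN N ∂(volume), -t₀ ≤ u x ∧ u x ≤ t₀ := by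
  have h1 := key_bound N s t₀ gt u hN hs0 hNs ht₀ hvan hu
  have hneg : IsWeakSol N s gt (fun x => -u x) := by
    refine ⟨⟨hu.1.1.neg, ?_⟩, ?_⟩
    · have hfe : (fun p : RN N × RN N =>
          ((fun x => -u x) p.1 - (fun x => -u x) p.2)^2 / ‖p.1 - p.2‖ ^ ((N:ℝ)+2*s)) =
          (fun p : RN N × RN N => (u p.1 - u p.2)^2 / ‖p.1 - p.2‖ ^ ((N:ℝ)+2*s)) := by
        funext p
        simp only
        rw [show (-u p.1) - (-u p.2) = -(u p.1 - u p.2) by ring, neg_sq]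
      unfold GagliardoFinite
      rw [hfe]
      exact hu.1.2
    · intro φ hφ
      have h2 := hu.2 φ hφ
      have e1 : fracForm N s (fun x => -u x) φ = -fracForm N s u φ := by
        unfold fracForm
        rw [← integral_neg]
        congr 1
        funext p
        simp only
        ring
      have e2 : (∫ x : RN N, gt ((fun x => -u x) x) * φ x)
          = -∫ x : RN N, gt (u x) * φ x := by
        rw [← integral_neg]
        congr 1
        funext x
        simp only
        rw [hodd, neg_mul]
      rw [e1, e2, h2]
  have h2 := key_bound N s t₀ gt (fun x => -u x) hN hs0 hNs ht₀ hvan hneg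
  filter_upwards [h1, h2] with x hx1 hx2
  exact ⟨by simpa using neg_le.mp (by simpa using hx2), hx1⟩
end

section
/- Let g be an odd continuous function satisfying (g1). Then there exists β > 0 such that h(t) = 0 and H(t) = 0 for all t ∈ [−β, β]; moreover h is continuous on ℝ, h(t) ≥ 0 for t ≥ 0, and h is odd. -/
open MeasureTheory Filter Set

section Aux

open Filter Set

private lemma runSup_eq (q : ℝ → ℝ) (β a t : ℝ) (ha0 : 0 < a) (haβ : a ≤ β) (hat : a ≤ t)
    (hq0 : ∀ τ ∈ Set.Ioc (0:ℝ) β, q τ = 0)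
    (hqc : ContinuousOn q (Set.Ioi 0)) :
    sSup (q '' Set.Ioc 0 t) = sSup (q '' Set.Icc a t) := by
  have hsub : Set.Icc a t ⊆ Set.Ioi (0:ℝ) := fun x hx => lt_of_lt_of_le ha0 hx.1
  have hbdd : BddAbove (q '' Set.Icc a t) :=
    (isCompact_Icc.image_of_continuousOn (hqc.mono hsub)).bddAbove
  have hne : (q '' Set.Icc a t).Nonempty := (Set.nonempty_Icc.mpr hat).image q
  have hub : ∀ x ∈ q '' Set.Ioc 0 t, x ≤ sSup (q '' Set.Icc a t) := by
    rintro x ⟨τ, hτ, rfl⟩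
    rcases le_or_gt a τ with h | h
    · exact le_csSup hbdd ⟨τ, ⟨h, hτ.2⟩, rfl⟩
    · rw [hq0 τ ⟨hτ.1, h.le.trans haβ⟩]
      calc (0:ℝ) = q a := (hq0 a ⟨ha0, haβ⟩).symm
        _ ≤ _ := le_csSup hbdd ⟨a, ⟨le_rfl, hat⟩, rfl⟩
  have hbdd' : BddAbove (q '' Set.Ioc 0 t) := ⟨_, hub⟩
  refine le_antisymm (csSup_le ((Set.nonempty_Ioc.mpr (lt_of_lt_of_le ha0 hat)).image q) hub)
    (csSup_le_csSup hbdd' hne (Set.image_mono (f := q) (fun x hx => ⟨lt_of_lt_of_le ha0 hx.1, hx.2⟩)))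

private lemma runSup_contAt (q : ℝ → ℝ) (β t₀ : ℝ) (hβ : 0 < β) (ht₀ : 0 < t₀)
    (hq0 : ∀ τ ∈ Set.Ioc (0:ℝ) β, q τ = 0)
    (hqc : ContinuousOn q (Set.Ioi 0)) :
    ContinuousAt (fun t => sSup (q '' Set.Ioc 0 t)) t₀ := by
  set a : ℝ := min β t₀ / 2 with ha_def
  have ha0 : 0 < a := by
    have h := lt_min hβ ht₀
    rw [ha_def]; linarith
  have haβ : a ≤ β := by
    have h1 : min β t₀ ≤ β := min_le_left _ _
    have := min_le_left β t₀
    nlinarith [min_le_left β t₀]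
  have hat₀ : a < t₀ := by
    have h1 : min β t₀ ≤ t₀ := min_le_right _ _
    have h2 : 0 < min β t₀ := lt_min hβ ht₀
    nlinarith
  set F : ℝ → ℝ := fun t => sSup (q '' Set.Icc a t) with hF_def
  have hKsub : Set.Icc a (t₀ + 1) ⊆ Set.Ioi (0:ℝ) := fun x hx => lt_of_lt_of_le ha0 hx.1
  have hKc : IsCompact (Set.Icc a (t₀ + 1)) := isCompact_Icc
  have hbddK : BddAbove (q '' Set.Icc a (t₀ + 1)) :=
    (hKc.image_of_continuousOn (hqc.mono hKsub)).bddAbove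
  have hbdd : ∀ u, u ≤ t₀ + 1 → BddAbove (q '' Set.Icc a u) :=
    fun u hu => hbddK.mono (Set.image_mono (f := q) (Set.Icc_subset_Icc le_rfl hu))
  have hmono : ∀ u v, a ≤ u → u ≤ v → v ≤ t₀ + 1 → F u ≤ F v := by
    intro u v hau huv hv
    exact csSup_le_csSup (hbdd v hv) ((Set.nonempty_Icc.mpr hau).image q)
      (Set.image_mono (f := q) (Set.Icc_subset_Icc le_rfl huv))
  have hFc : ContinuousAt F t₀ := by
    rw [Metric.continuousAt_iff]
    intro ε hε
    have hUC : UniformContinuousOn q (Set.Icc a (t₀ + 1)) :=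
      hKc.uniformContinuousOn_of_continuous (hqc.mono hKsub)
    rw [Metric.uniformContinuousOn_iff] at hUC
    obtain ⟨δ₀, hδ₀, hUC⟩ := hUC (ε / 2) (by linarith)
    refine ⟨min δ₀ (min (t₀ - a) 1), lt_min hδ₀ (lt_min (by linarith) one_pos), ?_⟩
    intro t ht
    rw [Real.dist_eq] at ht
    have ht1 : |t - t₀| < δ₀ := lt_of_lt_of_le ht (min_le_left _ _)
    have ht2 : |t - t₀| < t₀ - a := lt_of_lt_of_le ht ((min_le_right _ _).trans (min_le_left _ _))
    have ht3 : |t - t₀| < 1 := lt_of_lt_of_le ht ((min_le_right _ _).trans (min_le_right _ _))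
    rw [abs_lt] at ht2 ht3
    have hta : a ≤ t := by linarith [ht2.1]
    have htub : t ≤ t₀ + 1 := by linarith [ht3.2]
    have claim : ∀ u v, a ≤ u → u ≤ v → v ≤ t₀ + 1 → v - u < δ₀ → F v ≤ F u + ε / 2 := by
      intro u v hau huv hvub hd
      refine csSup_le ((Set.nonempty_Icc.mpr (hau.trans huv)).image q) ?_
      rintro x ⟨τ, hτ, rfl⟩
      rcases le_or_gt τ u with h | h
      · have : q τ ≤ F u := le_csSup (hbdd u (huv.trans hvub)) ⟨τ, ⟨hτ.1, h⟩, rfl⟩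
        linarith
      · have hτK : τ ∈ Set.Icc a (t₀ + 1) := ⟨hτ.1, hτ.2.trans hvub⟩
        have huK : u ∈ Set.Icc a (t₀ + 1) := ⟨hau, le_trans (huv.trans hvub) le_rfl⟩
        have hd2 : dist τ u < δ₀ := by
          rw [Real.dist_eq, abs_lt]
          constructor <;> [linarith [hτ.2]; linarith [hτ.2]]
        have := hUC τ hτK u huK hd2
        rw [Real.dist_eq, abs_lt] at this
        have hqu : q u ≤ F u := le_csSup (hbdd u (huv.trans hvub)) ⟨u, ⟨hau, le_rfl⟩, rfl⟩
        linarith [this.1]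
    rw [Real.dist_eq, abs_sub_lt_iff]
    rcases le_total t t₀ with h | h
    · have h1 : F t ≤ F t₀ := hmono t t₀ hta h (by linarith)
      have h2 : F t₀ ≤ F t + ε / 2 := claim t t₀ hta h (by linarith) (by rw [abs_lt] at ht1; linarith [ht1.1])
      constructor <;> linarith
    · have h1 : F t₀ ≤ F t := hmono t₀ t hat₀.le h htub
      have h2 : F t ≤ F t₀ + ε / 2 := claim t₀ t hat₀.le h htub (by rw [abs_lt] at ht1; linarith [ht1.2])
      constructor <;> linarith
  refine hFc.congr ?_
  have hmem : Set.Ioi a ∈ nhds t₀ := isOpen_Ioi.mem_nhds hat₀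
  filter_upwards [hmem] with t hta
  exact (runSup_eq q β a t ha0 haβ (le_of_lt hta) hq0 hqc).symm

end Aux

/-- properties (h1)–(h2) of the penalty function `h`. -/
theorem penalty_function_basic_properties
    (N : ℕ) (s m p : ℝ) (g : ℝ → ℝ)
    (hN : 2 ≤ N) (hs0 : 0 < s) (hs1 : s < 1) (hNs : 2 * s < (N : ℝ))
    (hcont : Continuous g) (hodd : OddFun g) (hg1 : CondG1 g m)
    (hp1 : 1 < p) (hp2 : p < ((N : ℝ) + 2 * s) / ((N : ℝ) - 2 * s)) :
    (∃ β > 0, ∀ t ∈ Icc (-β) β, hfun g m p t = 0 ∧ Hfun g m p t = 0) ∧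
    Continuous (hfun g m p) ∧ (∀ t, 0 ≤ t → 0 ≤ hfun g m p t) ∧
    (∀ t, hfun g m p (-t) = -hfun g m p t) := by
  obtain ⟨hm, -, hlimsup⟩ := hg1
  have hp0 : (0:ℝ) < p := by linarith
  set q : ℝ → ℝ := fun τ => fplus g m τ / τ ^ p with hq_def
  -- continuity of q on (0,∞)
  have hfc : Continuous (fplus g m) :=
    continuous_const.max ((continuous_const.mul continuous_id).add hcont)
  have hqc : ContinuousOn q (Ioi 0) := by
    apply ContinuousOn.div hfc.continuousOn
    · intro x hx
      exact (Real.continuousAt_rpow_const x p (Or.inl (ne_of_gt hx))).continuousWithinAt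
    · intro x hx
      exact ne_of_gt (Real.rpow_pos_of_pos hx p)
  -- find β
  have hlt : limsup (fun t : ℝ => ((g t / t : ℝ) : EReal)) (nhdsWithin 0 (Ioi 0))
      < ((-m/2 : ℝ) : EReal) := by
    rw [hlimsup]
    exact_mod_cast (by linarith : -m < -m/2)
  have hev := Filter.eventually_lt_of_limsup_lt hlt
  rw [Filter.eventually_iff, mem_nhdsGT_iff_exists_Ioc_subset] at hev
  obtain ⟨β, hβmem, hsub⟩ := hev
  have hβ : (0:ℝ) < β := hβmem
  -- f vanishes on (0, β]
  have hf0 : ∀ τ ∈ Ioc (0:ℝ) β, fplus g m τ = 0 := by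
    intro τ hτ
    have h1 : ((g τ / τ : ℝ) : EReal) < ((-m/2 : ℝ) : EReal) := hsub hτ
    have h2 : g τ / τ < -m/2 := by exact_mod_cast h1
    have h3 : g τ < -m/2 * τ := by
      have := (div_lt_iff₀ hτ.1).mp h2
      linarith
    have h4 : m / 2 * τ + g τ ≤ 0 := by linarith
    exact max_eq_left h4
  have hq0 : ∀ τ ∈ Ioc (0:ℝ) β, q τ = 0 := by
    intro τ hτ
    simp [hq_def, hf0 τ hτ]
  -- sSup is zero for small t
  have hS0 : ∀ t : ℝ, 0 < t → t ≤ β → sSup (q '' Ioc 0 t) = 0 := by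
    intro t ht htβ
    have hset : q '' Ioc 0 t = {0} := by
      rw [Set.eq_singleton_iff_nonempty_unique_mem]
      refine ⟨(Set.nonempty_Ioc.mpr ht).image q, ?_⟩
      rintro x ⟨τ, hτ, rfl⟩
      exact hq0 τ ⟨hτ.1, hτ.2.trans htβ⟩
    rw [hset, csSup_singleton]
  -- h vanishes on [-β, β]
  have hz : ∀ t ∈ Icc (-β) β, hfun g m p t = 0 := by
    intro t ht
    rcases lt_trichotomy t 0 with h | h | h
    · have h1 : ¬ (0 ≤ t) := not_le.mpr h
      have h2 : 0 < -t := by linarith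
      have h3 : -t ≤ β := by linarith [ht.1]
      simp only [hfun, if_neg h1, ← hq_def, hS0 (-t) h2 h3, mul_zero, neg_zero]
    · subst h
      simp [hfun, Real.zero_rpow (ne_of_gt hp0)]
    · simp only [hfun, if_pos h.le, ← hq_def, hS0 t h ht.2, mul_zero]
  -- oddness
  have hoddh : ∀ t, hfun g m p (-t) = -hfun g m p t := by
    intro t
    rcases lt_trichotomy t 0 with h | h | h
    · have h1 : ¬ (0 ≤ t) := not_le.mpr h
      have h2 : (0:ℝ) ≤ -t := by linarith
      simp only [hfun, if_pos h2, if_neg h1, neg_neg]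
    · subst h
      simp [hfun, Real.zero_rpow (ne_of_gt hp0)]
    · have h1 : ¬ (0 ≤ -t) := by simp; linarith
      simp only [hfun, if_pos h.le, if_neg h1, neg_neg]
  -- nonnegativity
  have hnn : ∀ t, 0 ≤ t → 0 ≤ hfun g m p t := by
    intro t ht
    simp only [hfun, if_pos ht]
    apply mul_nonneg (Real.rpow_nonneg ht p)
    apply Real.sSup_nonneg
    rintro x ⟨τ, hτ, rfl⟩
    exact div_nonneg (le_max_left _ _) (Real.rpow_nonneg hτ.1.le p)
  -- continuity
  have hcontAt_pos : ∀ t₀ : ℝ, 0 < t₀ → ContinuousAt (hfun g m p) t₀ := by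
    intro t₀ ht₀
    have hM : ContinuousAt (fun t => sSup (q '' Ioc 0 t)) t₀ :=
      runSup_contAt q β t₀ hβ ht₀ hq0 hqc
    have hpow : ContinuousAt (fun t : ℝ => t ^ p) t₀ :=
      Real.continuousAt_rpow_const t₀ p (Or.inl (ne_of_gt ht₀))
    refine (hpow.mul hM).congr ?_
    filter_upwards [isOpen_Ioi.mem_nhds ht₀] with t (hti : (0:ℝ) < t)
    simp only [hfun, if_pos hti.le, hq_def, Pi.mul_apply]
  have hcontAll : Continuous (hfun g m p) := by
    rw [continuous_iff_continuousAt]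
    intro t₀
    rcases lt_trichotomy t₀ 0 with h | h | h
    · have hrep : hfun g m p = fun t => -(hfun g m p (-t)) := by
        funext t
        rw [hoddh t, neg_neg]
      rw [hrep]
      exact ((hcontAt_pos (-t₀) (by linarith)).comp continuous_neg.continuousAt).neg
    · subst h
      have : ContinuousAt (fun _ : ℝ => (0:ℝ)) 0 := continuousAt_const
      refine this.congr ?_
      have hmem : Ioo (-β) β ∈ nhds (0:ℝ) := isOpen_Ioo.mem_nhds ⟨by linarith, hβ⟩
      filter_upwards [hmem] with t ht
      exact (hz t ⟨ht.1.le, ht.2.le⟩).symm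
    · exact hcontAt_pos t₀ h
  refine ⟨⟨β, hβ, ?_⟩, hcontAll, hnn, hoddh⟩
  intro t ht
  refine ⟨hz t ht, ?_⟩
  have : EqOn (hfun g m p) (fun _ => (0:ℝ)) (uIcc 0 t) := by
    intro τ hτ
    apply hz
    rcases le_total 0 t with h | h
    · rw [uIcc_of_le h] at hτ
      exact ⟨le_trans (by linarith [hβ.le]) hτ.1, hτ.2.trans ht.2⟩
    · rw [uIcc_of_ge h] at hτ
      exact ⟨le_trans ht.1 hτ.1, hτ.2.trans hβ.le⟩
  rw [Hfun, intervalIntegral.integral_congr this, intervalIntegral.integral_const, smul_zero]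
end

section
/- Let g be an odd continuous function satisfying (g1) and (g2'). Then lim_{|t|→∞} h(t)/|t|^{(N+2s)/(N−2s)} = 0. -/
open MeasureTheory Filter Set

/-- property (h4): `lim_{|t|→∞} h(t)/|t|^{(N+2s)/(N-2s)} = 0`. -/
theorem penalty_function_subcritical_growth
    (N : ℕ) (s m p : ℝ) (g : ℝ → ℝ)
    (hN : 2 ≤ N) (hs0 : 0 < s) (hs1 : s < 1) (hNs : 2 * s < (N : ℝ))
    (hcont : Continuous g) (hodd : OddFun g) (hg1 : CondG1 g m)
    (hg2' : CondG2' N s g)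
    (hp1 : 1 < p) (hp2 : p < ((N : ℝ) + 2 * s) / ((N : ℝ) - 2 * s)) :
    Tendsto (fun t : ℝ => hfun g m p t / |t| ^ (((N : ℝ) + 2 * s) / ((N : ℝ) - 2 * s)))
      (comap abs atTop) (nhds 0) := by
  set q : ℝ := ((N : ℝ) + 2 * s) / ((N : ℝ) - 2 * s) with hqdef
  have hden : (0:ℝ) < (N : ℝ) - 2 * s := by linarith
  have hm : 0 < m := hg1.1
  have hq1 : 1 < q := lt_trans hp1 hp2
  have hpq : p < q := hp2
  have hp0 : 0 < p := lt_trans one_pos hp1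
  have hcrit : critExp N s - 1 = q := by
    rw [critExp, hqdef]
    field_simp
    ring
  -- Step A: fplus vanishes near 0
  obtain ⟨δ, hδ0, hδ⟩ : ∃ δ > 0, ∀ τ ∈ Ioc (0:ℝ) δ, fplus g m τ = 0 := by
    have hls := hg1.2.2
    have hlt : limsup (fun t : ℝ => ((g t / t : ℝ) : EReal)) (nhdsWithin 0 (Ioi 0))
        < ((-m/2 : ℝ) : EReal) := by
      rw [hls]
      exact_mod_cast (by linarith : -m < -m/2)
    have hev := Filter.eventually_lt_of_limsup_lt hlt
    have hev' : ∀ᶠ τ in nhdsWithin (0:ℝ) (Ioi 0), g τ / τ < -m/2 := by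
      filter_upwards [hev] with τ hτ
      exact_mod_cast hτ
    obtain ⟨δ, hδmem, hsub⟩ := mem_nhdsGT_iff_exists_Ioc_subset.mp hev'
    refine ⟨δ, hδmem, fun τ hτ => ?_⟩
    have hτ0 : 0 < τ := hτ.1
    have h1 : g τ / τ < -m/2 := hsub hτ
    have h2 : g τ < -m/2 * τ := (div_lt_iff₀ hτ0).mp h1
    have : m / 2 * τ + g τ ≤ 0 := by linarith
    exact max_eq_left this
  -- reduce to ε-form
  rw [NormedAddCommGroup.tendsto_nhds_zero]
  intro ε hε
  have hε2 : 0 < ε / 2 := half_pos hε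
  -- Step B: growth bound on g for large arguments
  have hg2'' : Tendsto (fun t : ℝ => g t / |t| ^ q) (comap abs atTop) (nhds 0) := by
    have := hg2'
    rw [CondG2', hcrit] at this
    exact this
  have hgev : ∀ᶠ r in atTop, ∀ t : ℝ, |t| = r → |g t / |t| ^ q| < ε / 2 := by
    have := (Metric.tendsto_nhds.mp hg2'') (ε/2) hε2
    rw [Filter.eventually_comap] at this
    filter_upwards [this] with r hr t ht
    have h2 := hr t ht
    rwa [Real.dist_eq, sub_zero] at h2
  obtain ⟨A, hA⟩ := Filter.eventually_atTop.mp hgev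
  set T1 : ℝ := max A (max 1 δ) with hT1def
  have hT1_1 : (1:ℝ) ≤ T1 := le_trans (le_max_left 1 δ) (le_max_right _ _)
  have hT1_δ : δ ≤ T1 := le_trans (le_max_right 1 δ) (le_max_right _ _)
  have hT1_0 : (0:ℝ) < T1 := lt_of_lt_of_le one_pos hT1_1
  have hgbd : ∀ τ : ℝ, T1 ≤ τ → |g τ| ≤ ε / 2 * τ ^ q := by
    intro τ hτ
    have hτ0 : 0 < τ := lt_of_lt_of_le hT1_0 hτ
    have habs : |τ| = τ := abs_of_pos hτ0
    have hAτ : A ≤ τ := le_trans (le_max_left _ _) hτ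
    have := hA τ hAτ τ habs
    rw [habs] at this
    have hpow : (0:ℝ) < τ ^ q := Real.rpow_pos_of_pos hτ0 q
    rw [abs_div, abs_of_pos hpow, div_lt_iff₀ hpow] at this
    linarith
  -- Step C: bound on the middle range
  have hfc : Continuous (fplus g m) :=
    continuous_const.max ((continuous_const.mul continuous_id).add hcont)
  obtain ⟨C, hC⟩ : ∃ C : ℝ, ∀ τ ∈ Icc δ T1, fplus g m τ / τ ^ p ≤ C := by
    have hcont' : ContinuousOn (fun τ : ℝ => fplus g m τ / τ ^ p) (Icc δ T1) := by
      apply ContinuousOn.div hfc.continuousOn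
      · intro τ hτ
        exact (Real.continuousAt_rpow_const τ p
          (Or.inl (ne_of_gt (lt_of_lt_of_le hδ0 hτ.1)))).continuousWithinAt
      · intro τ hτ
        exact (Real.rpow_pos_of_pos (lt_of_lt_of_le hδ0 hτ.1) p).ne'
    obtain ⟨C, hC⟩ := (isCompact_Icc.image_of_continuousOn hcont').bddAbove
    exact ⟨C, fun τ hτ => hC ⟨τ, hτ, rfl⟩⟩
  set D : ℝ := max C (m / 2) with hDdef
  have hD0 : 0 < D := lt_of_lt_of_le (half_pos hm) (le_max_right _ _)
  -- the small factor eventually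
  have htend : Tendsto (fun r : ℝ => D * r ^ (p - q)) atTop (nhds 0) := by
    have h0 : Tendsto (fun r : ℝ => r ^ (-(q - p))) atTop (nhds 0) :=
      tendsto_rpow_neg_atTop (by linarith)
    have h1 : Tendsto (fun r : ℝ => D * r ^ (-(q - p))) atTop (nhds (D * 0)) :=
      h0.const_mul D
    simpa [neg_sub] using h1
  have hsmall : ∀ᶠ r in atTop, D * r ^ (p - q) < ε / 2 := by
    have := htend.eventually (eventually_lt_nhds hε2)
    simpa using this
  -- final combination
  rw [Filter.eventually_comap]
  filter_upwards [hsmall, eventually_ge_atTop T1] with r hrsmall hrT1 t ht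
  have hr0 : 0 < r := lt_of_lt_of_le hT1_0 hrT1
  have hr1 : (1:ℝ) ≤ r := le_trans hT1_1 hrT1
  have hrq : (0:ℝ) < r ^ q := Real.rpow_pos_of_pos hr0 q
  have hrp : (0:ℝ) < r ^ p := Real.rpow_pos_of_pos hr0 p
  -- the sup set and its bound
  set S : ℝ := sSup ((fun τ => fplus g m τ / τ ^ p) '' Ioc 0 r) with hSdef
  have hbd : ∀ x ∈ (fun τ => fplus g m τ / τ ^ p) '' Ioc 0 r,
      x ≤ D + ε / 2 * r ^ (q - p) := by
    rintro x ⟨τ, hτ, rfl⟩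
    dsimp only
    have hτ0 : 0 < τ := hτ.1
    have hτr : τ ≤ r := hτ.2
    have hτp : (0:ℝ) < τ ^ p := Real.rpow_pos_of_pos hτ0 p
    have hrqp : (0:ℝ) ≤ ε / 2 * r ^ (q - p) :=
      mul_nonneg (le_of_lt hε2) (le_of_lt (Real.rpow_pos_of_pos hr0 _))
    rcases le_or_gt τ δ with hcase | hcase
    · -- fplus = 0
      rw [hδ τ ⟨hτ0, hcase⟩, zero_div]
      positivity
    · rcases le_or_gt τ T1 with hcase2 | hcase2
      · -- middle range
        have := hC τ ⟨le_of_lt hcase, hcase2⟩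
        calc fplus g m τ / τ ^ p ≤ C := this
          _ ≤ D := le_max_left _ _
          _ ≤ D + ε / 2 * r ^ (q - p) := le_add_of_nonneg_right hrqp
      · -- large range
        have hτ1 : (1:ℝ) ≤ τ := le_trans hT1_1 (le_of_lt hcase2)
        have hf : fplus g m τ ≤ m / 2 * τ + ε / 2 * τ ^ q := by
          have h1 : |g τ| ≤ ε / 2 * τ ^ q := hgbd τ (le_of_lt hcase2)
          have h2 : g τ ≤ ε / 2 * τ ^ q := le_trans (le_abs_self _) h1
          have h3 : m / 2 * τ + g τ ≤ m / 2 * τ + ε / 2 * τ ^ q := by linarith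
          have h4 : (0:ℝ) ≤ m / 2 * τ + ε / 2 * τ ^ q := by
            have : (0:ℝ) < τ ^ q := Real.rpow_pos_of_pos hτ0 q
            have : (0:ℝ) ≤ ε / 2 * τ ^ q := by positivity
            nlinarith
          exact max_le h4 h3
        have key : fplus g m τ / τ ^ p ≤ m / 2 * τ ^ (1 - p) + ε / 2 * τ ^ (q - p) := by
          rw [div_le_iff₀ hτp]
          have e1 : τ ^ (1 - p) * τ ^ p = τ := by
            rw [← Real.rpow_add hτ0, ← Real.rpow_one τ]
            norm_num
          have e2 : τ ^ (q - p) * τ ^ p = τ ^ q := by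
            rw [← Real.rpow_add hτ0]
            ring_nf
          calc fplus g m τ ≤ m / 2 * τ + ε / 2 * τ ^ q := hf
            _ = (m / 2 * τ ^ (1 - p) + ε / 2 * τ ^ (q - p)) * τ ^ p := by
                rw [add_mul, mul_assoc, mul_assoc, e1, e2]
        have h1p : τ ^ (1 - p) ≤ 1 :=
          Real.rpow_le_one_of_one_le_of_nonpos hτ1 (by linarith)
        have hqp : τ ^ (q - p) ≤ r ^ (q - p) :=
          Real.rpow_le_rpow (le_of_lt hτ0) hτr (by linarith)
        calc fplus g m τ / τ ^ p ≤ m / 2 * τ ^ (1 - p) + ε / 2 * τ ^ (q - p) := key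
          _ ≤ m / 2 * 1 + ε / 2 * r ^ (q - p) := by
              have := half_pos hm
              have := half_pos hε
              gcongr
          _ ≤ D + ε / 2 * r ^ (q - p) := by
              have : m / 2 ≤ D := le_max_right _ _
              linarith
  have hbdd : BddAbove ((fun τ => fplus g m τ / τ ^ p) '' Ioc 0 r) :=
    ⟨D + ε / 2 * r ^ (q - p), hbd⟩
  have hSle : S ≤ D + ε / 2 * r ^ (q - p) :=
    Real.sSup_le hbd (by positivity)
  have hS0 : 0 ≤ S := by
    have hmem : fplus g m r / r ^ p ∈ (fun τ => fplus g m τ / τ ^ p) '' Ioc 0 r :=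
      ⟨r, ⟨hr0, le_refl r⟩, rfl⟩
    have h1 : fplus g m r / r ^ p ≤ S := le_csSup hbdd hmem
    have h2 : (0:ℝ) ≤ fplus g m r / r ^ p :=
      div_nonneg (le_max_left _ _) (le_of_lt hrp)
    linarith
  have hval : hfun g m p r = r ^ p * S := by
    rw [hfun, if_pos (le_of_lt hr0), hSdef]
  have hhr0 : 0 ≤ hfun g m p r := by
    rw [hval]; positivity
  -- compute |hfun t| = hfun r
  have habs : |hfun g m p t| = hfun g m p r := by
    rcases le_or_gt 0 t with htpos | htneg
    · have : t = r := by rw [← ht, abs_of_nonneg htpos]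
      rw [this, abs_of_nonneg hhr0]
    · have hneg : -t = r := by rw [← ht, abs_of_neg htneg]
      have : hfun g m p t = -hfun g m p r := by
        rw [hfun, if_neg (not_le.mpr htneg), hneg, hval, hSdef]
      rw [this, abs_neg, abs_of_nonneg hhr0]
  -- final bound
  have hub : hfun g m p r ≤ D * r ^ p + ε / 2 * r ^ q := by
    rw [hval]
    have e2 : r ^ p * r ^ (q - p) = r ^ q := by
      rw [← Real.rpow_add hr0]; ring_nf
    calc r ^ p * S ≤ r ^ p * (D + ε / 2 * r ^ (q - p)) := by
          exact mul_le_mul_of_nonneg_left hSle (le_of_lt hrp)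
      _ = D * r ^ p + ε / 2 * (r ^ p * r ^ (q - p)) := by ring
      _ = D * r ^ p + ε / 2 * r ^ q := by rw [e2]
  have hdiv : hfun g m p r / r ^ q ≤ D * r ^ (p - q) + ε / 2 := by
    rw [div_le_iff₀ hrq]
    have e1 : r ^ (p - q) * r ^ q = r ^ p := by
      rw [← Real.rpow_add hr0]; ring_nf
    calc hfun g m p r ≤ D * r ^ p + ε / 2 * r ^ q := hub
      _ = (D * r ^ (p - q) + ε / 2) * r ^ q := by
          rw [add_mul, mul_assoc, e1]
  have hrt : |t| ^ q = r ^ q := by rw [ht]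
  rw [Real.norm_eq_abs, abs_div, habs, hrt, abs_of_pos hrq]
  calc hfun g m p r / r ^ q ≤ D * r ^ (p - q) + ε / 2 := hdiv
    _ < ε / 2 + ε / 2 := by linarith
    _ = ε := by ring
end

section
/- Let g be an odd continuous function satisfying (g1). Then h satisfies the Ambrosetti–Rabinowitz condition: 0 ≤ (p+1)H(t) ≤ h(t)t for all t ∈ ℝ. -/
open MeasureTheory Filter Set

section ARproof

open Filter Set

private lemma hfun_zero (g : ℝ → ℝ) (m p : ℝ) (hp : 0 < p) : hfun g m p 0 = 0 := by
  simp [hfun, Real.zero_rpow (ne_of_gt hp)]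

private lemma hfun_odd (g : ℝ → ℝ) (m p : ℝ) (hp : 0 < p) (t : ℝ) :
    hfun g m p (-t) = -hfun g m p t := by
  rcases lt_trichotomy t 0 with ht | ht | ht
  · rw [hfun, if_pos (by linarith), hfun, if_neg (not_le.2 ht), neg_neg]
  · subst ht; simp [hfun_zero g m p hp]
  · rw [hfun, if_neg (by linarith), hfun, if_pos ht.le, neg_neg]

private lemma Hfun_even (g : ℝ → ℝ) (m p : ℝ) (hp : 0 < p) (t : ℝ) :
    Hfun g m p (-t) = Hfun g m p t := by
  unfold Hfun
  have h1 : ∫ x in (0:ℝ)..t, hfun g m p (-x) = ∫ x in (-t)..(-0:ℝ), hfun g m p x :=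
    intervalIntegral.integral_comp_neg _
  have h2 : ∫ x in (0:ℝ)..t, hfun g m p (-x) = -∫ x in (0:ℝ)..t, hfun g m p x := by
    simp_rw [hfun_odd g m p hp]
    exact intervalIntegral.integral_neg
  rw [h2, neg_zero, intervalIntegral.integral_symm 0 (-t)] at h1
  linarith

/-- From (g1): `fplus` vanishes near `0⁺`. -/
private lemma fplus_zero_near (g : ℝ → ℝ) (m : ℝ) (hg1 : CondG1 g m) :
    ∃ δ > 0, ∀ τ ∈ Ioc (0:ℝ) δ, fplus g m τ = 0 := by
  obtain ⟨hm, -, hlimsup⟩ := hg1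
  have hev : ∀ᶠ τ in nhdsWithin 0 (Ioi (0:ℝ)),
      ((g τ / τ : ℝ) : EReal) < ((-m/2 : ℝ) : EReal) := by
    refine Filter.eventually_lt_of_limsup_lt ?_
      ⟨⊤, Filter.eventually_map.mpr (Filter.Eventually.of_forall fun _ => le_top)⟩
    rw [hlimsup]
    exact_mod_cast (by linarith : -m < -m/2)
  rw [Filter.eventually_iff] at hev
  obtain ⟨δ, hδ0, hδ⟩ := mem_nhdsGT_iff_exists_Ioc_subset.mp hev
  refine ⟨δ, hδ0, fun τ hτ => ?_⟩
  have h1 : g τ / τ < -m/2 := EReal.coe_lt_coe_iff.mp (hδ hτ)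
  have h2 : g τ < -m/2 * τ := (div_lt_iff₀ hτ.1).mp h1
  exact max_eq_left (by nlinarith [hτ.1])

private lemma AR_pos (g : ℝ → ℝ) (m p : ℝ) (hm : 0 < m) (hp1 : 1 < p)
    (hcont : Continuous g) (hg1 : CondG1 g m) (t : ℝ) (ht : 0 < t) :
    0 ≤ (p + 1) * Hfun g m p t ∧ (p + 1) * Hfun g m p t ≤ hfun g m p t * t := by
  obtain ⟨δ, hδ0, hδ⟩ := fplus_zero_near g m hg1
  have hp0 : (0:ℝ) < p := by linarith
  set F : ℝ → ℝ := fun τ => fplus g m τ / τ ^ p with hF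
  -- boundedness of the quotient set
  have hfc : Continuous (fplus g m) := by
    apply continuous_const.max
    exact (continuous_const.mul continuous_id).add hcont
  set δ' : ℝ := min δ t with hδ'
  have hδ'0 : 0 < δ' := lt_min hδ0 ht
  obtain ⟨M, hM⟩ := (isCompact_Icc (a := δ') (b := t)).bddAbove_image
    hfc.continuousOn
  have hMnn : 0 ≤ M := by
    have : fplus g m t ∈ (fplus g m) '' Icc δ' t :=
      ⟨t, ⟨min_le_right _ _, le_refl t⟩, rfl⟩
    exact le_trans (le_max_left _ _) (hM this)
  have hbdd : BddAbove (F '' Ioc 0 t) := by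
    refine ⟨max 0 (M / δ' ^ p), fun x hx => ?_⟩
    obtain ⟨τ, hτ, rfl⟩ := hx
    by_cases hcase : τ ≤ δ
    · rw [hF]; simp only
      rw [hδ τ ⟨hτ.1, hcase⟩, zero_div]
      exact le_max_left _ _
    · push_neg at hcase
      have hτδ' : δ' ≤ τ := le_trans (min_le_left _ _) hcase.le
      have hfτ : fplus g m τ ≤ M := hM ⟨τ, ⟨hτδ', hτ.2⟩, rfl⟩
      have hτp : δ' ^ p ≤ τ ^ p := Real.rpow_le_rpow hδ'0.le hτδ' hp0.le
      have hδ'p : (0:ℝ) < δ' ^ p := Real.rpow_pos_of_pos hδ'0 p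
      refine le_trans ?_ (le_max_right _ _)
      exact div_le_div₀ hMnn hfτ hδ'p hτp
  set S : ℝ := sSup (F '' Ioc 0 t) with hSdef
  have hS0 : 0 ≤ S := by
    have hmem : F t ∈ F '' Ioc 0 t := ⟨t, ⟨ht, le_refl t⟩, rfl⟩
    have : 0 ≤ F t := div_nonneg (le_max_left _ _) (Real.rpow_nonneg ht.le p)
    exact le_trans this (le_csSup hbdd hmem)
  -- pointwise facts on [0, t]
  have hnonneg : ∀ τ ∈ Icc (0:ℝ) t, 0 ≤ hfun g m p τ := by
    intro τ hτ
    rcases eq_or_lt_of_le hτ.1 with h0 | h0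
    · rw [← h0, hfun_zero g m p hp0]
    · rw [hfun, if_pos h0.le]
      have hsub : F '' Ioc 0 τ ⊆ F '' Ioc 0 t :=
        image_mono (Ioc_subset_Ioc_right hτ.2)
      have hb : BddAbove (F '' Ioc 0 τ) := hbdd.mono hsub
      have hmem : F τ ∈ F '' Ioc 0 τ := ⟨τ, ⟨h0, le_refl τ⟩, rfl⟩
      have h1 : 0 ≤ F τ := div_nonneg (le_max_left _ _) (Real.rpow_nonneg h0.le p)
      exact mul_nonneg (Real.rpow_nonneg h0.le p) (le_trans h1 (le_csSup hb hmem))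
  have hub : ∀ τ ∈ Icc (0:ℝ) t, hfun g m p τ ≤ τ ^ p * S := by
    intro τ hτ
    rcases eq_or_lt_of_le hτ.1 with h0 | h0
    · rw [← h0, hfun_zero g m p hp0, Real.zero_rpow (ne_of_gt hp0), zero_mul]
    · rw [hfun, if_pos h0.le]
      have hsub : F '' Ioc 0 τ ⊆ F '' Ioc 0 t :=
        image_mono (Ioc_subset_Ioc_right hτ.2)
      have hne : (F '' Ioc 0 τ).Nonempty := ⟨F τ, τ, ⟨h0, le_refl τ⟩, rfl⟩
      have hle : sSup (F '' Ioc 0 τ) ≤ S := csSup_le_csSup hbdd hne hsub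
      exact mul_le_mul_of_nonneg_left hle (Real.rpow_nonneg h0.le p)
  have hHnn : 0 ≤ Hfun g m p t :=
    intervalIntegral.integral_nonneg ht.le hnonneg
  have hft : hfun g m p t = t ^ p * S := by rw [hfun, if_pos ht.le]
  constructor
  · exact mul_nonneg (by linarith) hHnn
  · by_cases hint : IntervalIntegrable (hfun g m p) MeasureTheory.volume 0 t
    · have hcS : Continuous fun τ : ℝ => τ ^ p * S := by
        apply Continuous.mul _ continuous_const
        exact continuous_iff_continuousAt.2 fun x =>
          Real.continuousAt_rpow_const x p (Or.inr hp0.le)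
      have hintS : IntervalIntegrable (fun τ : ℝ => τ ^ p * S)
          MeasureTheory.volume 0 t := hcS.intervalIntegrable 0 t
      have hmono : Hfun g m p t ≤ ∫ τ in (0:ℝ)..t, τ ^ p * S :=
        intervalIntegral.integral_mono_on ht.le hint hintS hub
      have hval : ∫ τ in (0:ℝ)..t, τ ^ p * S = t ^ (p + 1) / (p + 1) * S := by
        rw [intervalIntegral.integral_mul_const,
          integral_rpow (Or.inl (by linarith : (-1:ℝ) < p)),
          Real.zero_rpow (by positivity : p + 1 ≠ 0)]
        ring
      have htp : t ^ (p + 1) = t ^ p * t := Real.rpow_add_one (ne_of_gt ht) p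
      rw [hft]
      rw [hval] at hmono
      have hp1' : (0:ℝ) < p + 1 := by linarith
      calc (p + 1) * Hfun g m p t ≤ (p + 1) * (t ^ (p + 1) / (p + 1) * S) := by
            exact mul_le_mul_of_nonneg_left hmono hp1'.le
        _ = t ^ p * S * t := by rw [htp]; field_simp
    · rw [Hfun, intervalIntegral.integral_undef hint, mul_zero]
      exact mul_nonneg (hnonneg t ⟨ht.le, le_refl t⟩) ht.le

end ARproof

/-- property (h5), the Ambrosetti–Rabinowitz condition
`0 ≤ (p+1)H(t) ≤ h(t)t` for all `t`. -/
theorem penalty_function_AR_condition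
    (N : ℕ) (s m p : ℝ) (g : ℝ → ℝ)
    (hN : 2 ≤ N) (hs0 : 0 < s) (hs1 : s < 1) (hNs : 2 * s < (N : ℝ))
    (hcont : Continuous g) (hodd : OddFun g) (hg1 : CondG1 g m)
    (hp1 : 1 < p) (hp2 : p < ((N : ℝ) + 2 * s) / ((N : ℝ) - 2 * s)) :
    ∀ t : ℝ, 0 ≤ (p + 1) * Hfun g m p t ∧ (p + 1) * Hfun g m p t ≤ hfun g m p t * t := by
  have hm : 0 < m := hg1.1
  have hp0 : (0:ℝ) < p := by linarith
  intro t
  rcases lt_trichotomy t 0 with ht | ht | ht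
  · have h1 := AR_pos g m p hm hp1 hcont hg1 (-t) (by linarith)
    have hH : Hfun g m p t = Hfun g m p (-t) := by
      rw [← Hfun_even g m p hp0 t]
    have hhh : hfun g m p t * t = hfun g m p (-t) * (-t) := by
      have := hfun_odd g m p hp0 (-t)
      rw [neg_neg] at this
      rw [this]; ring
    rw [hH, hhh]
    exact h1
  · subst ht
    simp [Hfun, intervalIntegral.integral_same]
  · exact AR_pos g m p hm hp1 hcont hg1 t ht
end
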